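/- Let π and π' be policy sequences with π'_n(a|x) > 0 for all n, x, a, and let μ = μ^π and μ' = μ^{π'} be the induced state-action distribution sequences from the same initial distribution μ0, with state marginals ρ_n(x) = Σ_a μ_n(x,a) and ρ'_n(x) = Σ_a μ'_n(x,a). Then D(μ_{0:N}, μ'_{0:N}) = Σ_{n=1}^N D(μ_n, μ'_n) − Σ_{n=1}^N D(ρ_n, ρ'_n), where D on the left is the KL divergence between path distributions on (X×A)^{N+1}. -/

import Mathlib

open Finset

/-- A probability distribution on a finite type, viewed as a nonnegative
function summing to one. -/
def IsDist {S : Type*} [Fintype S] (μ : S → ℝ) : Prop :=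
  (∀ z, 0 ≤ μ z) ∧ ∑ z, μ z = 1

/-- The state-action distribution sequence induced by a policy sequence `π`
from the initial distribution `μ0`, with transition kernels `p`. -/
noncomputable def induced {X A : Type*} [Fintype X] [Fintype A]
    (μ0 : X × A → ℝ) (p : ℕ → X → A → X → ℝ) (π : ℕ → X → A → ℝ) :
    ℕ → X × A → ℝ
  | 0 => μ0
  | n + 1 => fun y =>
      ∑ z : X × A, induced μ0 p π n z * p (n + 1) z.1 z.2 y.1 * π (n + 1) y.1 y.2

/-- The path distribution `μ^π_{0:N}` on `(X × A)^{N+1}`: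
`μ^π_{0:N}(y_0,…,y_N) = μ0(y_0) ∏_{n=1}^N p_n(x_n|x_{n−1},a_{n−1}) π_n(a_n|x_n)`. -/
noncomputable def pathDist {X A : Type*} [Fintype X] [Fintype A]
    (N : ℕ) (μ0 : X × A → ℝ) (p : ℕ → X → A → X → ℝ) (π : ℕ → X → A → ℝ)
    (y : Fin (N + 1) → X × A) : ℝ :=
  μ0 (y 0) * ∏ n : Fin N,
    (p ((n : ℕ) + 1) (y n.castSucc).1 (y n.castSucc).2 (y n.succ).1 *
      π ((n : ℕ) + 1) (y n.succ).1 (y n.succ).2)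

/-- Kullback–Leibler divergence between two probability mass functions on a
finite type, with the convention `0 · log 0 = 0` (automatic in `ℝ`). -/
noncomputable def kl {S : Type*} [Fintype S] (η ν : S → ℝ) : ℝ :=
  ∑ z, η z * Real.log (η z / ν z)

section Helpers

variable {X A : Type*} [Fintype X] [Fintype A]

lemma induced_succ (μ0 : X × A → ℝ) (p : ℕ → X → A → X → ℝ) (π : ℕ → X → A → ℝ)
    (n : ℕ) (y : X × A) :
    induced μ0 p π (n+1) y
      = ∑ z : X × A, induced μ0 p π n z * p (n + 1) z.1 z.2 y.1 * π (n + 1) y.1 y.2 := rfl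

lemma sum_snoc (M : ℕ) (F : (Fin (M+1+1) → X × A) → ℝ) :
    ∑ y : Fin (M+1+1) → X × A, F y
      = ∑ y' : Fin (M+1) → X × A, ∑ z : X × A, F (Fin.snoc y' z) := by
  rw [← Fintype.sum_bijective (Fin.snocEquiv (fun _ => X × A)) (Equiv.bijective _) _ F
    (fun q => rfl)]
  rw [Fintype.sum_prod_type, Finset.sum_comm]
  refine Finset.sum_congr rfl fun y' _ => Finset.sum_congr rfl fun z _ => ?_
  simp [Fin.snocEquiv]

lemma pathDist_snoc (M : ℕ) (μ0 : X × A → ℝ) (p : ℕ → X → A → X → ℝ)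
    (π : ℕ → X → A → ℝ) (y' : Fin (M+1) → X × A) (z : X × A) :
    pathDist (M+1) μ0 p π (Fin.snoc y' z)
      = pathDist M μ0 p π y' *
        (p (M+1) (y' (Fin.last M)).1 (y' (Fin.last M)).2 z.1 * π (M+1) z.1 z.2) := by
  unfold pathDist
  rw [Fin.prod_univ_castSucc]
  have h0 : (0 : Fin (M+2)) = Fin.castSucc 0 := rfl
  simp only [h0, Fin.snoc_castSucc, Fin.succ_castSucc, Fin.succ_last, Fin.snoc_last,
    Fin.coe_castSucc, Fin.val_last]
  ring

lemma induced_nonneg {N : ℕ} {p : ℕ → X → A → X → ℝ}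
    (hp : ∀ n, 1 ≤ n → n ≤ N → ∀ x a x', 0 ≤ p n x a x')
    {μ0 : X × A → ℝ} (hμ0 : ∀ z, 0 ≤ μ0 z)
    {π : ℕ → X → A → ℝ} (hπ : ∀ n x a, 1 ≤ n → n ≤ N → 0 ≤ π n x a) :
    ∀ n, n ≤ N → ∀ z, 0 ≤ induced μ0 p π n z := by
  intro n
  induction n with
  | zero => exact fun _ z => hμ0 z
  | succ m ih =>
    intro h z
    rw [induced_succ]
    refine Finset.sum_nonneg fun w _ => mul_nonneg (mul_nonneg ?_ ?_) ?_
    · exact ih (Nat.le_of_succ_le h) w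
    · exact hp (m+1) (Nat.succ_le_succ (Nat.zero_le m)) h w.1 w.2 z.1
    · exact hπ (m+1) z.1 z.2 (Nat.succ_le_succ (Nat.zero_le m)) h

lemma induced_pos {N : ℕ} {p : ℕ → X → A → X → ℝ}
    (hp : ∀ n, 1 ≤ n → n ≤ N → ∀ x a x', 0 ≤ p n x a x')
    {μ0 : X × A → ℝ} (hμ0 : ∀ z, 0 ≤ μ0 z)
    {π π' : ℕ → X → A → ℝ} (hπ : ∀ n x a, 1 ≤ n → n ≤ N → 0 ≤ π n x a)
    (hπ'pos : ∀ n x a, 1 ≤ n → n ≤ N → 0 < π' n x a) :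
    ∀ n, n ≤ N → ∀ z, 0 < induced μ0 p π n z → 0 < induced μ0 p π' n z := by
  intro n
  induction n with
  | zero => exact fun _ z h => h
  | succ m ih =>
    intro h z hz
    rw [induced_succ] at hz ⊢
    have h1 : (1:ℕ) ≤ m + 1 := Nat.succ_le_succ (Nat.zero_le m)
    obtain ⟨w, -, hw⟩ := Finset.exists_ne_zero_of_sum_ne_zero hz.ne'
    rw [mul_ne_zero_iff, mul_ne_zero_iff] at hw
    have hμw : 0 < induced μ0 p π m w :=
      (induced_nonneg hp hμ0 hπ m (Nat.le_of_succ_le h) w).lt_of_ne (Ne.symm hw.1.1)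
    have hpw : 0 < p (m+1) w.1 w.2 z.1 :=
      (hp (m+1) h1 h w.1 w.2 z.1).lt_of_ne (Ne.symm hw.1.2)
    refine Finset.sum_pos' (fun v _ => mul_nonneg (mul_nonneg ?_ ?_) ?_) ⟨w, Finset.mem_univ w, ?_⟩
    · exact induced_nonneg hp hμ0 (fun n x a h1 h2 => (hπ'pos n x a h1 h2).le) m
        (Nat.le_of_succ_le h) v
    · exact hp (m+1) h1 h v.1 v.2 z.1
    · exact (hπ'pos (m+1) z.1 z.2 h1 h).le
    · exact mul_pos (mul_pos (ih (Nat.le_of_succ_le h) w hμw) hpw) (hπ'pos (m+1) z.1 z.2 h1 h)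

lemma marginal_last (μ0 : X × A → ℝ) (p : ℕ → X → A → X → ℝ) (π : ℕ → X → A → ℝ) :
    ∀ (M : ℕ) (f : X × A → ℝ),
      ∑ y : Fin (M+1) → X × A, pathDist M μ0 p π y * f (y (Fin.last M))
        = ∑ z : X × A, induced μ0 p π M z * f z := by
  intro M
  induction M with
  | zero =>
    intro f
    refine Fintype.sum_equiv (Equiv.funUnique (Fin 1) (X × A)) _ _ fun y => ?_
    simp [pathDist, induced, Equiv.funUnique]
  | succ M ih =>
    intro f
    rw [sum_snoc]
    have : ∀ y' : Fin (M+1) → X × A, ∀ z : X × A,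
        pathDist (M+1) μ0 p π (Fin.snoc y' z) * f ((Fin.snoc y' z : Fin (M+2) → X × A) (Fin.last (M+1)))
          = pathDist M μ0 p π y' *
            (p (M+1) (y' (Fin.last M)).1 (y' (Fin.last M)).2 z.1 * π (M+1) z.1 z.2 * f z) := by
      intro y' z
      rw [pathDist_snoc, Fin.snoc_last]
      ring
    simp only [this]
    rw [Finset.sum_comm]
    have := fun z : X × A => ih (fun w => p (M+1) w.1 w.2 z.1 * π (M+1) z.1 z.2 * f z)
    simp only [this]
    refine Finset.sum_congr rfl fun z _ => ?_
    rw [induced_succ, Finset.sum_mul]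
    try refine Finset.sum_congr rfl fun w _ => by ring

lemma pathDist_nonneg {N M : ℕ} (hMN : M ≤ N) {p : ℕ → X → A → X → ℝ}
    (hpnn : ∀ n, 1 ≤ n → n ≤ N → ∀ x a x', 0 ≤ p n x a x')
    {μ0 : X × A → ℝ} (hμ0 : ∀ z, 0 ≤ μ0 z)
    {π : ℕ → X → A → ℝ} (hπnn : ∀ n x a, 1 ≤ n → n ≤ N → 0 ≤ π n x a)
    (y : Fin (M+1) → X × A) : 0 ≤ pathDist M μ0 p π y := by
  refine mul_nonneg (hμ0 _) (Finset.prod_nonneg fun n _ => mul_nonneg ?_ ?_)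
  · exact hpnn _ (Nat.succ_le_succ (Nat.zero_le _))
      (Nat.succ_le_of_lt (lt_of_lt_of_le n.isLt hMN)) _ _ _
  · exact hπnn _ _ _ (Nat.succ_le_succ (Nat.zero_le _))
      (Nat.succ_le_of_lt (lt_of_lt_of_le n.isLt hMN))

lemma pathDist_pos {N M : ℕ} (hMN : M ≤ N) {p : ℕ → X → A → X → ℝ}
    (hpnn : ∀ n, 1 ≤ n → n ≤ N → ∀ x a x', 0 ≤ p n x a x')
    {μ0 : X × A → ℝ} (hμ0 : ∀ z, 0 ≤ μ0 z)
    {π π' : ℕ → X → A → ℝ}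
    (hπ'pos : ∀ n x a, 1 ≤ n → n ≤ N → 0 < π' n x a)
    (y : Fin (M+1) → X × A) (h : 0 < pathDist M μ0 p π y) :
    0 < pathDist M μ0 p π' y := by
  have h1 := (mul_ne_zero_iff.mp h.ne').1
  have h2 := (mul_ne_zero_iff.mp h.ne').2
  refine mul_pos ((hμ0 _).lt_of_ne (Ne.symm h1)) (Finset.prod_pos fun n _ => ?_)
  have hb1 : 1 ≤ (n : ℕ) + 1 := Nat.succ_le_succ (Nat.zero_le _)
  have hb2 : (n : ℕ) + 1 ≤ N := Nat.succ_le_of_lt (lt_of_lt_of_le n.isLt hMN)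
  have hfac := Finset.prod_ne_zero_iff.mp h2 n (Finset.mem_univ n)
  exact mul_pos ((hpnn _ hb1 hb2 _ _ _).lt_of_ne (Ne.symm (mul_ne_zero_iff.mp hfac).1))
    (hπ'pos _ _ _ hb1 hb2)

lemma path_kl {N : ℕ} {p : ℕ → X → A → X → ℝ}
    (hpnn : ∀ n, 1 ≤ n → n ≤ N → ∀ x a x', 0 ≤ p n x a x')
    (hpsum : ∀ n, 1 ≤ n → n ≤ N → ∀ x a, ∑ x', p n x a x' = 1)
    {μ0 : X × A → ℝ} (hμ0 : ∀ z, 0 ≤ μ0 z)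
    {π π' : ℕ → X → A → ℝ}
    (hπnn : ∀ n x a, 1 ≤ n → n ≤ N → 0 ≤ π n x a)
    (hπsum : ∀ n x, 1 ≤ n → n ≤ N → ∑ a, π n x a = 1)
    (hπ'pos : ∀ n x a, 1 ≤ n → n ≤ N → 0 < π' n x a) :
    ∀ M, M ≤ N → kl (pathDist M μ0 p π) (pathDist M μ0 p π')
      = ∑ n ∈ Finset.Icc 1 M, ∑ z : X × A,
          induced μ0 p π n z * Real.log (π n z.1 z.2 / π' n z.1 z.2) := by
  intro M
  induction M with
  | zero =>
    intro _
    rw [show Finset.Icc 1 0 = (∅ : Finset ℕ) by rfl, Finset.sum_empty, kl]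
    refine Finset.sum_eq_zero fun y _ => ?_
    simp only [pathDist, Finset.univ_eq_empty, Finset.prod_empty, mul_one]
    rcases eq_or_ne (μ0 (y 0)) 0 with h | h
    · simp [h]
    · rw [div_self h, Real.log_one, mul_zero]
  | succ M ih =>
    intro hM
    have hMN : M ≤ N := Nat.le_of_succ_le hM
    have hb1 : 1 ≤ M + 1 := Nat.succ_le_succ (Nat.zero_le _)
    rw [kl, sum_snoc]
    have key : ∀ (y' : Fin (M+1) → X × A) (z : X × A),
        pathDist (M+1) μ0 p π (Fin.snoc y' z) *
          Real.log (pathDist (M+1) μ0 p π (Fin.snoc y' z) /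
            pathDist (M+1) μ0 p π' (Fin.snoc y' z))
        = pathDist M μ0 p π y' *
            Real.log (pathDist M μ0 p π y' / pathDist M μ0 p π' y') *
            (p (M+1) (y' (Fin.last M)).1 (y' (Fin.last M)).2 z.1 * π (M+1) z.1 z.2)
          + pathDist M μ0 p π y' *
            (p (M+1) (y' (Fin.last M)).1 (y' (Fin.last M)).2 z.1 * π (M+1) z.1 z.2 *
              Real.log (π (M+1) z.1 z.2 / π' (M+1) z.1 z.2)) := by
      intro y' z
      rw [pathDist_snoc, pathDist_snoc]
      set P := pathDist M μ0 p π y' with hP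
      set P' := pathDist M μ0 p π' y' with hP'
      set pp := p (M+1) (y' (Fin.last M)).1 (y' (Fin.last M)).2 z.1 with hpp
      set t := π (M+1) z.1 z.2 with ht
      set t' := π' (M+1) z.1 z.2 with ht'
      rcases eq_or_ne (P * (pp * t)) 0 with h | h
      · rcases mul_eq_zero.mp h with h' | h'
        · rw [h']; rcases mul_eq_zero.mp h' with h'' | h'' <;> simp [h'']
        · rw [h']; rcases mul_eq_zero.mp h' with h'' | h'' <;> simp [h'']
      · have hPne := (mul_ne_zero_iff.mp h).1
        have hppne := (mul_ne_zero_iff.mp (mul_ne_zero_iff.mp h).2).1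
        have htne := (mul_ne_zero_iff.mp (mul_ne_zero_iff.mp h).2).2
        have hPpos : 0 < P :=
          (pathDist_nonneg hMN hpnn hμ0 hπnn y').lt_of_ne (Ne.symm hPne)
        have hP'pos : 0 < P' := pathDist_pos hMN hpnn hμ0 hπ'pos y' hPpos
        have hppos : 0 < pp :=
          (hpnn (M+1) hb1 hM _ _ _).lt_of_ne (Ne.symm hppne)
        have htpos : 0 < t := (hπnn (M+1) z.1 z.2 hb1 hM).lt_of_ne (Ne.symm htne)
        have ht'pos : 0 < t' := hπ'pos (M+1) z.1 z.2 hb1 hM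
        have hratio : P * (pp * t) / (P' * (pp * t')) = P / P' * (t / t') := by
          field_simp
        rw [hratio, Real.log_mul (div_pos hPpos hP'pos).ne' (div_pos htpos ht'pos).ne']
        ring
    simp only [key]
    have hsum1 : ∀ w : X × A,
        ∑ z : X × A, p (M+1) w.1 w.2 z.1 * π (M+1) z.1 z.2 = 1 := by
      intro w
      rw [Fintype.sum_prod_type]
      simp_rw [← Finset.mul_sum]
      calc ∑ x', p (M+1) w.1 w.2 x' * ∑ a, π (M+1) x' a
          = ∑ x', p (M+1) w.1 w.2 x' := by
            refine Finset.sum_congr rfl fun x' _ => ?_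
            rw [hπsum (M+1) x' hb1 hM, mul_one]
        _ = 1 := hpsum (M+1) hb1 hM w.1 w.2
    rw [show (∑ y' : Fin (M+1) → X × A, ∑ z : X × A, _) = _ from Finset.sum_congr rfl
      fun y' _ => Finset.sum_add_distrib, Finset.sum_add_distrib]
    have hA : (∑ y' : Fin (M+1) → X × A, ∑ z : X × A,
        pathDist M μ0 p π y' *
          Real.log (pathDist M μ0 p π y' / pathDist M μ0 p π' y') *
          (p (M+1) (y' (Fin.last M)).1 (y' (Fin.last M)).2 z.1 * π (M+1) z.1 z.2))
        = ∑ n ∈ Finset.Icc 1 M, ∑ z : X × A,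
            induced μ0 p π n z * Real.log (π n z.1 z.2 / π' n z.1 z.2) := by
      rw [← ih hMN, kl]
      refine Finset.sum_congr rfl fun y' _ => ?_
      rw [← Finset.mul_sum, hsum1 (y' (Fin.last M)), mul_one]
    have hB : (∑ y' : Fin (M+1) → X × A, ∑ z : X × A,
        pathDist M μ0 p π y' *
          (p (M+1) (y' (Fin.last M)).1 (y' (Fin.last M)).2 z.1 * π (M+1) z.1 z.2 *
            Real.log (π (M+1) z.1 z.2 / π' (M+1) z.1 z.2)))
        = ∑ z : X × A, induced μ0 p π (M+1) z *
            Real.log (π (M+1) z.1 z.2 / π' (M+1) z.1 z.2) := by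
      rw [Finset.sum_comm]
      have := fun z : X × A => marginal_last μ0 p π M
        (fun w => p (M+1) w.1 w.2 z.1 * π (M+1) z.1 z.2 *
          Real.log (π (M+1) z.1 z.2 / π' (M+1) z.1 z.2))
      simp only [this]
      refine Finset.sum_congr rfl fun z _ => ?_
      rw [induced_succ, Finset.sum_mul]
      refine Finset.sum_congr rfl fun w _ => by ring
    rw [hA, hB, Finset.sum_Icc_succ_top hb1]

lemma step_kl {N : ℕ} {p : ℕ → X → A → X → ℝ}
    (hpnn : ∀ n, 1 ≤ n → n ≤ N → ∀ x a x', 0 ≤ p n x a x')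
    {μ0 : X × A → ℝ} (hμ0 : ∀ z, 0 ≤ μ0 z)
    {π π' : ℕ → X → A → ℝ}
    (hπnn : ∀ n x a, 1 ≤ n → n ≤ N → 0 ≤ π n x a)
    (hπsum : ∀ n x, 1 ≤ n → n ≤ N → ∑ a, π n x a = 1)
    (hπ'sum : ∀ n x, 1 ≤ n → n ≤ N → ∑ a, π' n x a = 1)
    (hπ'pos : ∀ n x a, 1 ≤ n → n ≤ N → 0 < π' n x a)
    (m : ℕ) (hm : m + 1 ≤ N) :
    kl (induced μ0 p π (m+1)) (induced μ0 p π' (m+1)) -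
      kl (fun x : X => ∑ a : A, induced μ0 p π (m+1) (x, a))
        (fun x : X => ∑ a : A, induced μ0 p π' (m+1) (x, a))
      = ∑ z : X × A, induced μ0 p π (m+1) z *
          Real.log (π (m+1) z.1 z.2 / π' (m+1) z.1 z.2) := by
  have hb1 : 1 ≤ m + 1 := Nat.succ_le_succ (Nat.zero_le _)
  have hmN : m ≤ N := Nat.le_of_succ_le hm
  set σ := fun x : X => ∑ z : X × A, induced μ0 p π m z * p (m+1) z.1 z.2 x with hσ
  set σ' := fun x : X => ∑ z : X × A, induced μ0 p π' m z * p (m+1) z.1 z.2 x with hσ'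
  have hμ : ∀ z : X × A, induced μ0 p π (m+1) z = σ z.1 * π (m+1) z.1 z.2 := by
    intro z; rw [induced_succ, hσ, ← Finset.sum_mul]
  have hμ' : ∀ z : X × A, induced μ0 p π' (m+1) z = σ' z.1 * π' (m+1) z.1 z.2 := by
    intro z; rw [induced_succ, hσ', ← Finset.sum_mul]
  have hρ : ∀ x, (∑ a, induced μ0 p π (m+1) (x, a)) = σ x := by
    intro x
    simp only [hμ]
    rw [← Finset.mul_sum, hπsum (m+1) x hb1 hm, mul_one]
  have hρ' : ∀ x, (∑ a, induced μ0 p π' (m+1) (x, a)) = σ' x := by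
    intro x
    simp only [hμ']
    rw [← Finset.mul_sum, hπ'sum (m+1) x hb1 hm, mul_one]
  have hσnn : ∀ x, 0 ≤ σ x := by
    intro x
    refine Finset.sum_nonneg fun w _ => mul_nonneg ?_ (hpnn (m+1) hb1 hm _ _ _)
    exact induced_nonneg hpnn hμ0 hπnn m hmN w
  have hσ'pos : ∀ x, 0 < σ x → 0 < σ' x := by
    intro x hx
    obtain ⟨w, -, hw⟩ := Finset.exists_ne_zero_of_sum_ne_zero hx.ne'
    rw [mul_ne_zero_iff] at hw
    have hμw : 0 < induced μ0 p π m w :=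
      (induced_nonneg hpnn hμ0 hπnn m hmN w).lt_of_ne (Ne.symm hw.1)
    have hpw : 0 < p (m+1) w.1 w.2 x :=
      (hpnn (m+1) hb1 hm _ _ _).lt_of_ne (Ne.symm hw.2)
    refine Finset.sum_pos' (fun v _ => mul_nonneg ?_ (hpnn (m+1) hb1 hm _ _ _))
      ⟨w, Finset.mem_univ w, ?_⟩
    · exact induced_nonneg hpnn hμ0 (fun n x a h1 h2 => (hπ'pos n x a h1 h2).le) m hmN v
    · exact mul_pos (induced_pos hpnn hμ0 hπnn hπ'pos m hmN w hμw) hpw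
  simp only [kl]
  simp only [hμ, hμ']
  have hρ2 : ∀ x, (∑ a, σ x * π (m+1) x a) = σ x := fun x => by
    rw [← Finset.mul_sum, hπsum (m+1) x hb1 hm, mul_one]
  have hρ'2 : ∀ x, (∑ a, σ' x * π' (m+1) x a) = σ' x := fun x => by
    rw [← Finset.mul_sum, hπ'sum (m+1) x hb1 hm, mul_one]
  simp only [hρ2, hρ'2]
  have hmarg : (∑ x, σ x * Real.log (σ x / σ' x))
      = ∑ z : X × A, σ z.1 * π (m+1) z.1 z.2 * Real.log (σ z.1 / σ' z.1) := by
    rw [Fintype.sum_prod_type]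
    refine Finset.sum_congr rfl fun x _ => ?_
    have : (∑ a, σ x * π (m+1) x a * Real.log (σ x / σ' x))
        = (∑ a, π (m+1) x a) * (σ x * Real.log (σ x / σ' x)) := by
      rw [Finset.sum_mul]
      refine Finset.sum_congr rfl fun a _ => by ring
    rw [this, hπsum (m+1) x hb1 hm, one_mul]
  rw [hmarg, ← Finset.sum_sub_distrib]
  refine Finset.sum_congr rfl fun z _ => ?_
  set s := σ z.1
  set s' := σ' z.1
  set t := π (m+1) z.1 z.2 with ht
  set t' := π' (m+1) z.1 z.2 with ht'
  rcases eq_or_ne (s * t) 0 with h | h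
  · rcases mul_eq_zero.mp h with h' | h' <;> simp [h']
  · have hsne := (mul_ne_zero_iff.mp h).1
    have htne := (mul_ne_zero_iff.mp h).2
    have hspos : 0 < s := (hσnn z.1).lt_of_ne (Ne.symm hsne)
    have hs'pos : 0 < s' := hσ'pos z.1 hspos
    have htpos : 0 < t := (hπnn (m+1) z.1 z.2 hb1 hm).lt_of_ne (Ne.symm htne)
    have ht'pos : 0 < t' := hπ'pos (m+1) z.1 z.2 hb1 hm
    have hratio : s * t / (s' * t') = s / s' * (t / t') := by
      field_simp
      try ring
    rw [hratio, Real.log_mul (div_pos hspos hs'pos).ne' (div_pos htpos ht'pos).ne']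
    ring


end Helpers

/-- Decomposition of the KL divergence between path distributions:
`D(μ_{0:N}, μ'_{0:N}) = Σ_{n=1}^N D(μ_n, μ'_n) − Σ_{n=1}^N D(ρ_n, ρ'_n)`,
where `ρ_n(x) = Σ_a μ_n(x,a)` are the state marginals. -/
theorem kl_pathDist_decomposition {X A : Type*} [Fintype X] [Fintype A]
    [Nonempty X] [Nonempty A]
    (N : ℕ) (hN : 1 ≤ N)
    (p : ℕ → X → A → X → ℝ)
    (hp : ∀ n, 1 ≤ n → n ≤ N → ∀ x a, IsDist (fun x' => p n x a x'))
    (μ0 : X × A → ℝ) (hμ0 : IsDist μ0)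
    (π π' : ℕ → X → A → ℝ)
    (hπ : ∀ n x, 1 ≤ n → n ≤ N → IsDist (π n x))
    (hπ' : ∀ n x, 1 ≤ n → n ≤ N → IsDist (π' n x))
    (hπ'pos : ∀ n x a, 1 ≤ n → n ≤ N → 0 < π' n x a) :
    kl (pathDist N μ0 p π) (pathDist N μ0 p π') =
      (∑ n ∈ Finset.Icc 1 N, kl (induced μ0 p π n) (induced μ0 p π' n)) -
        ∑ n ∈ Finset.Icc 1 N,
          kl (fun x : X => ∑ a : A, induced μ0 p π n (x, a))
            (fun x : X => ∑ a : A, induced μ0 p π' n (x, a)) := by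
  have hpnn : ∀ n, 1 ≤ n → n ≤ N → ∀ x a x', 0 ≤ p n x a x' :=
    fun n h1 h2 x a x' => (hp n h1 h2 x a).1 x'
  have hpsum : ∀ n, 1 ≤ n → n ≤ N → ∀ x a, ∑ x', p n x a x' = 1 :=
    fun n h1 h2 x a => (hp n h1 h2 x a).2
  have hμ0nn : ∀ z, 0 ≤ μ0 z := hμ0.1
  have hπnn : ∀ n x a, 1 ≤ n → n ≤ N → 0 ≤ π n x a :=
    fun n x a h1 h2 => (hπ n x h1 h2).1 a
  have hπsum : ∀ n x, 1 ≤ n → n ≤ N → ∑ a, π n x a = 1 :=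
    fun n x h1 h2 => (hπ n x h1 h2).2
  have hπ'sum : ∀ n x, 1 ≤ n → n ≤ N → ∑ a, π' n x a = 1 :=
    fun n x h1 h2 => (hπ' n x h1 h2).2
  rw [path_kl hpnn hpsum hμ0nn hπnn hπsum hπ'pos N le_rfl, ← Finset.sum_sub_distrib]
  refine Finset.sum_congr rfl fun n hn => ?_
  obtain ⟨h1n, h2n⟩ := Finset.mem_Icc.mp hn
  obtain ⟨m, rfl⟩ : ∃ m, n = m + 1 := ⟨n - 1, by omega⟩
  exact (step_kl hpnn hμ0nn hπnn hπsum hπ'sum hπ'pos m h2n).symm
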